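/- Fix A ∈ 𝕀ℝ and let F : 𝕀ℝ → 𝕀ℝ be continuous with respect to the Moore metric d_M and bounded on every bounded subset of 𝕀ℝ. For Y ∈ 𝕀ℝ with A ≪ Y define G(Y) = [∫_{a̲}^{y̲} F_l^Y(x)dx, ∫_{a̲}^{y̲} F_r^Y(x)dx] · max{1, (ȳ−ā)/(y̲−a̲)}, where F_l^Y(x) = π₁ F([x, ā + ((ȳ−ā)/(y̲−a̲))(x−a̲)]) and F_r^Y(x) = π₂ F([x, ā + ((ȳ−ā)/(y̲−a̲))(x−a̲)]) (so that G(Y) = ∫_A^Y F(X)dX by the characterization theorem, and note d_M(A,Y)/(y̲−a̲) = max{1, (ȳ−ā)/(y̲−a̲)}). Then G is continuous on {Y ∈ 𝕀ℝ : A ≪ Y} with respect to d_M. -/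

import Mathlib

/-- `𝕀ℝ`: the set of nonempty closed bounded real intervals, identified with
pairs `(lo, hi) ∈ ℝ × ℝ` with `lo ≤ hi`.  The subtype order inherited from the
product order on `ℝ × ℝ` is exactly the Kulisch–Miranker order, and the
inherited metric (sup metric of `ℝ × ℝ`) is exactly the Moore metric `d_M`. -/
abbrev IR : Type := {p : ℝ × ℝ // p.1 ≤ p.2}

namespace IR

/-- Left endpoint projection `π₁`. -/
def lo (A : IR) : ℝ := A.val.1

/-- Right endpoint projection `π₂`. -/
def hi (A : IR) : ℝ := A.val.2

/-- The strict Kulisch–Miranker order `A ≪ B`. -/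
def sll (A B : IR) : Prop := lo A < lo B ∧ hi A < hi B

/-- The Moore metric `d_M`. -/
noncomputable def dM (A B : IR) : ℝ := max |lo B - lo A| |hi B - hi A|

/-- `𝕀_{[A,B]} = {X ∈ 𝕀ℝ : A ≤ X ≤ B}`. -/
def box (A B : IR) : Set IR := {X : IR | A ≤ X ∧ X ≤ B}

/-- The interval `[u,v]` (with a junk degenerate value if `u > v`). -/
noncomputable def mkI (u v : ℝ) : IR := if h : u ≤ v then ⟨(u, v), h⟩ else ⟨(u, u), le_rfl⟩

/-- The point `A + t(B - A)` on the segment from `A` to `B`. -/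
noncomputable def seg (A B : IR) (t : ℝ) : IR :=
  mkI (lo A + t * (lo B - lo A)) (hi A + t * (hi B - hi A))

/-- Componentwise infimum of a set of intervals, as a pair of reals. -/
noncomputable def infS (S : Set IR) : ℝ × ℝ := (sInf (lo '' S), sInf (hi '' S))

/-- Componentwise supremum of a set of intervals, as a pair of reals. -/
noncomputable def supS (S : Set IR) : ℝ × ℝ := (sSup (lo '' S), sSup (hi '' S))

/-- A partition `A = P₀ ≪ P₁ ≪ ⋯ ≪ P_N = B` of `𝕀_{[A,B]}`, described by its
parameters `0 = t₀ < t₁ < ⋯ < t_N = 1` (so that `P_k = A + t_k (B - A)`). -/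
structure Partition where
  n : ℕ
  npos : 0 < n
  t : ℕ → ℝ
  t0 : t 0 = 0
  tn : t n = 1
  mono : ∀ i < n, t i < t (i + 1)

/-- The set of parameters of a partition. -/
def Partition.pts (P : Partition) : Set ℝ := P.t '' Set.Iic P.n

/-- The set of points `P_k = A + t_k(B-A)` of a partition of `𝕀_{[A,B]}`. -/
noncomputable def Partition.ipts (A B : IR) (P : Partition) : Set IR :=
  (fun i => seg A B (P.t i)) '' Set.Iic P.n

/-- Lower Riemann sum `σ(F, 𝒫)` (as a pair of reals; interval sums are
componentwise and `λ • [u,v] = [λu, λv]` for the scalars `λ = d_M ≥ 0`). -/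
noncomputable def lowerSum (A B : IR) (F : IR → IR) (P : Partition) : ℝ × ℝ :=
  ∑ k ∈ Finset.range P.n,
    dM (seg A B (P.t k)) (seg A B (P.t (k + 1))) •
      infS (F '' box (seg A B (P.t k)) (seg A B (P.t (k + 1))))

/-- Upper Riemann sum `Σ(F, 𝒫)`. -/
noncomputable def upperSum (A B : IR) (F : IR → IR) (P : Partition) : ℝ × ℝ :=
  ∑ k ∈ Finset.range P.n,
    dM (seg A B (P.t k)) (seg A B (P.t (k + 1))) •
      supS (F '' box (seg A B (P.t k)) (seg A B (P.t (k + 1))))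

/-- The lower integral `∫̲_A^B F(X)dX`: componentwise supremum of the lower
Riemann sums over all partitions. -/
noncomputable def lowerInt (A B : IR) (F : IR → IR) : ℝ × ℝ :=
  (sSup (Set.range fun P : Partition => (lowerSum A B F P).1),
   sSup (Set.range fun P : Partition => (lowerSum A B F P).2))

/-- The upper integral `∫̄_A^B F(X)dX`: componentwise infimum of the upper
Riemann sums over all partitions. -/
noncomputable def upperInt (A B : IR) (F : IR → IR) : ℝ × ℝ :=
  (sInf (Set.range fun P : Partition => (upperSum A B F P).1),
   sInf (Set.range fun P : Partition => (upperSum A B F P).2))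

/-- `F` is bounded on `𝕀_{[A,B]}` (order bounded, equivalently metrically
bounded). -/
def BoundedOn (F : IR → IR) (A B : IR) : Prop :=
  ∃ C D : IR, ∀ X ∈ box A B, C ≤ F X ∧ F X ≤ D

end IR

/-- `G(Y) = [∫_{a̲}^{y̲} F_l^Y, ∫_{a̲}^{y̲} F_r^Y] · max{1, (ȳ−ā)/(y̲−a̲)}`, where
`F_l^Y(x) = π₁ F([x, ā + ((ȳ−ā)/(y̲−a̲))(x−a̲)])` and
`F_r^Y(x) = π₂ F([x, ā + ((ȳ−ā)/(y̲−a̲))(x−a̲)])`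
(so `G(Y) = ∫_A^Y F(X)dX` by the characterization theorem, since
`d_M(A,Y)/(y̲−a̲) = max{1, (ȳ−ā)/(y̲−a̲)}`). -/
noncomputable def IR.G (A : IR) (F : IR → IR) (Y : IR) : ℝ × ℝ :=
  max 1 ((IR.hi Y - IR.hi A) / (IR.lo Y - IR.lo A)) •
    ((∫ x in IR.lo A..IR.lo Y,
        IR.lo (F (IR.mkI x (IR.hi A +
          ((IR.hi Y - IR.hi A) / (IR.lo Y - IR.lo A)) * (x - IR.lo A))))),
     (∫ x in IR.lo A..IR.lo Y,
        IR.hi (F (IR.mkI x (IR.hi A +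
          ((IR.hi Y - IR.hi A) / (IR.lo Y - IR.lo A)) * (x - IR.lo A))))))

/-! The integrands of `G` are jointly continuous in the slope
`m = (ȳ - ā)/(y̲ - a̲)` and the integration variable, so the integrals are
continuous in `(m, y̲)` by continuity of parametric primitives; and `m` depends
continuously on `Y` as long as `y̲ ≠ a̲`. -/

namespace IR

theorem continuous_lo : Continuous lo := continuous_fst.comp continuous_subtype_val

theorem continuous_hi : Continuous hi := continuous_snd.comp continuous_subtype_val

theorem val_mkI (u v : ℝ) : (mkI u v).val = (u, max u v) := by
  unfold mkI
  split_ifs with h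
  · simp [max_eq_right h]
  · simp [max_eq_left (le_of_not_ge h)]

theorem continuous_mkI : Continuous fun p : ℝ × ℝ => mkI p.1 p.2 := by
  refine continuous_induced_rng.2 ?_
  simp only [Function.comp_def, val_mkI]
  fun_prop

theorem continuous_integral_mkI_line {g : IR → ℝ} (hg : Continuous g) (a b : ℝ) :
    Continuous fun p : ℝ × ℝ => ∫ x in a..p.2, g (mkI x (b + p.1 * (x - a))) :=
  intervalIntegral.continuous_parametric_primitive_of_continuous
    (f := fun m x => g (mkI x (b + m * (x - a))))
    (hg.comp (continuous_mkI.comp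
      (by fun_prop : Continuous fun p : ℝ × ℝ => (p.2, b + p.1 * (p.2 - a)))))

theorem continuousOn_slope (A : IR) :
    ContinuousOn (fun Y => (hi Y - hi A) / (lo Y - lo A)) {Y | lo Y ≠ lo A} :=
  (continuous_hi.sub continuous_const).continuousOn.div
    (continuous_lo.sub continuous_const).continuousOn fun _ hY => sub_ne_zero.2 hY

end IR

open IR in
theorem IR.G_continuous_general (A : IR) (F : IR → IR) (hFc : Continuous F) :
    ContinuousOn (G A F) {Y : IR | sll A Y} := by
  have hslope : ContinuousOn (fun Y => (hi Y - hi A) / (lo Y - lo A)) {Y | sll A Y} :=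
    (continuousOn_slope A).mono fun _ hY => hY.1.ne'
  have hargs : ContinuousOn (fun Y => ((hi Y - hi A) / (lo Y - lo A), lo Y)) {Y | sll A Y} :=
    hslope.prodMk continuous_lo.continuousOn
  have hlo :=
    (continuous_integral_mkI_line (continuous_lo.comp hFc) (lo A) (hi A)).comp_continuousOn hargs
  have hhi :=
    (continuous_integral_mkI_line (continuous_hi.comp hFc) (lo A) (hi A)).comp_continuousOn hargs
  exact (continuousOn_const.sup hslope).smul (hlo.prodMk hhi)

open IR in
/-- Fix `A ∈ 𝕀ℝ` and let `F : 𝕀ℝ → 𝕀ℝ` be continuous w.r.t. the Moore metric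
and bounded on every bounded subset (equivalently, on every `𝕀_{[C,D]}`).
Then `G(Y) = ∫_A^Y F(X)dX` is continuous on `{Y ∈ 𝕀ℝ : A ≪ Y}` w.r.t. the
Moore metric. -/
theorem IR.G_continuous (A : IR) (F : IR → IR) (hFc : Continuous F)
    (hFb : ∀ C D : IR, ∃ C' D' : IR, ∀ X ∈ box C D, C' ≤ F X ∧ F X ≤ D') :
    ContinuousOn (G A F) {Y : IR | sll A Y} :=
  IR.G_continuous_general A F hFc
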